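/- arXiv:1701.04495 — 2 statements merged into one kernel-verified Lean document; each statement's English description precedes it below -/
import Mathlib

section
/- Let G be a group, Γ ⊆ G a countable subgroup, and ‖·‖ : G → ℝ a function with ‖x‖ ≥ 1 for all x ∈ G; set ‖x‖_{Γ\G} := inf_{γ∈Γ} ‖γx‖. Let d > 0 be such that M_d := sup_{x∈G} ∑_{γ∈Γ} ‖γx‖^{-d} < ∞. Let n ≥ 0 and C ≥ 0, and let h : G → ℂ satisfy |h(x)| ≤ C·‖x‖^{-(d+n)} for all x ∈ G. Then for every x ∈ G the series ∑_{γ∈Γ} |h(γx)| converges and ∑_{γ∈Γ} |h(γx)| ≤ C·M_d·‖x‖_{Γ\G}^{-n}. -/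
/-! Since `‖γx‖ ≥ ‖x‖_{Γ\G}` for every `γ ∈ Γ`, each term satisfies
`|h(γx)| ≤ C ‖γx‖^{-d} ‖γx‖^{-n} ≤ C ‖x‖_{Γ\G}^{-n} ‖γx‖^{-d}`; summing over `Γ` and using
`∑_γ ‖γx‖^{-d} ≤ M_d` gives the bound. -/

theorem Real.rpow_neg_add_le_mul_rpow_neg {a q d n : ℝ} (hq : 0 < q) (hqa : q ≤ a)
    (hn : 0 ≤ n) : a ^ (-(d + n)) ≤ q ^ (-n) * a ^ (-d) := by
  have ha : 0 < a := hq.trans_le hqa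
  calc a ^ (-(d + n)) = a ^ (-n) * a ^ (-d) := by rw [← Real.rpow_add ha]; ring_nf
    _ ≤ q ^ (-n) * a ^ (-d) :=
      mul_le_mul_of_nonneg_right (Real.rpow_le_rpow_of_nonpos hq hqa (neg_nonpos.mpr hn))
        (Real.rpow_nonneg ha.le _)

theorem rpow_neg_add_le_iInf_rpow_neg_mul {ι : Type*} {f : ι → ℝ} {c : ℝ} (hc : 0 < c)
    (hf : ∀ i, c ≤ f i) {d n : ℝ} (hn : 0 ≤ n) (i : ι) :
    f i ^ (-(d + n)) ≤ (⨅ j, f j) ^ (-n) * f i ^ (-d) := by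
  have : Nonempty ι := ⟨i⟩
  have hbdd : BddBelow (Set.range f) := ⟨c, by rintro _ ⟨j, rfl⟩; exact hf j⟩
  exact Real.rpow_neg_add_le_mul_rpow_neg (hc.trans_le (le_ciInf hf)) (ciInf_le hbdd i) hn

theorem summable_norm_and_tsum_norm_le_of_norm_le_mul {ι E : Type*} [SeminormedAddCommGroup E]
    {g : ι → E} {w : ι → ℝ} {K M : ℝ} (hK : 0 ≤ K) (hgw : ∀ i, ‖g i‖ ≤ K * w i)
    (hw : Summable w) (hM : ∑' i, w i ≤ M) :
    (Summable fun i => ‖g i‖) ∧ ∑' i, ‖g i‖ ≤ K * M := by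
  have hKw : Summable fun i => K * w i := hw.mul_left K
  have hg : Summable fun i => ‖g i‖ := .of_nonneg_of_le (fun i => norm_nonneg _) hgw hKw
  refine ⟨hg, ?_⟩
  calc ∑' i, ‖g i‖ ≤ ∑' i, K * w i := hg.tsum_le_tsum hgw hKw
    _ = K * ∑' i, w i := tsum_mul_left
    _ ≤ K * M := mul_le_mul_of_nonneg_left hM hK

theorem stmt5_general {G : Type*} [Group G] (Γ : Subgroup G)
    (N : G → ℝ) (hN1 : ∀ x, 1 ≤ N x)
    (d : ℝ) (Md : ℝ)
    (hsum : ∀ x : G, Summable fun γ : Γ => N ((γ : G) * x) ^ (-d))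
    (hMd : ∀ x : G, (∑' γ : Γ, N ((γ : G) * x) ^ (-d)) ≤ Md)
    (n : ℝ) (hn : 0 ≤ n) (C : ℝ) (hC : 0 ≤ C)
    (h : G → ℂ) (hh : ∀ x : G, ‖h x‖ ≤ C * N x ^ (-(d + n))) :
    ∀ x : G, (Summable fun γ : Γ => ‖h ((γ : G) * x)‖) ∧
      (∑' γ : Γ, ‖h ((γ : G) * x)‖) ≤
        C * Md * (⨅ γ : Γ, N ((γ : G) * x)) ^ (-n) := by
  intro x
  set q : ℝ := ⨅ γ : Γ, N ((γ : G) * x)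
  have hK : 0 ≤ C * q ^ (-n) :=
    mul_nonneg hC (Real.rpow_nonneg (Real.iInf_nonneg fun γ => zero_le_one.trans (hN1 _)) _)
  have hterm (γ : Γ) : ‖h ((γ : G) * x)‖ ≤ C * q ^ (-n) * N ((γ : G) * x) ^ (-d) :=
    calc ‖h ((γ : G) * x)‖ ≤ C * N ((γ : G) * x) ^ (-(d + n)) := hh _
      _ ≤ C * (q ^ (-n) * N ((γ : G) * x) ^ (-d)) := mul_le_mul_of_nonneg_left
        (rpow_neg_add_le_iInf_rpow_neg_mul (f := fun γ : Γ => N ((γ : G) * x)) one_pos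
          (fun _ => hN1 _) hn γ) hC
      _ = C * q ^ (-n) * N ((γ : G) * x) ^ (-d) := (mul_assoc _ _ _).symm
  obtain ⟨hsummable, hle⟩ :=
    summable_norm_and_tsum_norm_le_of_norm_le_mul hK hterm (hsum x) (hMd x)
  exact ⟨hsummable, hle.trans_eq (by ring)⟩

/-- The core Poincaré-series estimate: if `M_d = sup_x ∑_{γ∈Γ} ‖γx‖^{-d} < ∞` and
`|h(x)| ≤ C‖x‖^{-(d+n)}`, then `∑_{γ∈Γ} |h(γx)|` converges and is bounded by
`C · M_d · ‖x‖_{Γ\G}^{-n}`. -/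
theorem stmt5 {G : Type*} [Group G] (Γ : Subgroup G) [Countable Γ]
    (N : G → ℝ) (hN1 : ∀ x, 1 ≤ N x)
    (d : ℝ) (hd : 0 < d) (Md : ℝ)
    (hsum : ∀ x : G, Summable fun γ : Γ => N ((γ : G) * x) ^ (-d))
    (hMd : ∀ x : G, (∑' γ : Γ, N ((γ : G) * x) ^ (-d)) ≤ Md)
    (n : ℝ) (hn : 0 ≤ n) (C : ℝ) (hC : 0 ≤ C)
    (h : G → ℂ) (hh : ∀ x : G, ‖h x‖ ≤ C * N x ^ (-(d + n))) :
    ∀ x : G, (Summable fun γ : Γ => ‖h ((γ : G) * x)‖) ∧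
      (∑' γ : Γ, ‖h ((γ : G) * x)‖) ≤
        C * Md * (⨅ γ : Γ, N ((γ : G) * x)) ^ (-n) :=
  stmt5_general Γ N hN1 d Md hsum hMd n hn C hC h hh
end

section
/- Let G be a locally compact Hausdorff topological group with left Haar measure μ, Γ ⊆ G a countable subgroup, and ‖·‖ : G → ℝ a measurable function with ‖x‖ ≥ 1 for all x ∈ G. Let d > 0 be such that M_d := sup_{x∈G} ∑_{γ∈Γ} ‖γx‖^{-d} < ∞. Let φ ∈ L¹(G, μ), let K ≥ 0, and let f : G → ℂ be measurable with |f(x)| ≤ K·‖x‖^{-d} for all x ∈ G. Then for each γ ∈ Γ the function x ↦ φ(γ⁻¹x)·f(x) is μ-integrable, and ∑_{γ∈Γ} |∫_G φ(γ⁻¹x)·f(x) dμ(x)| ≤ K·M_d·∫_G |φ| dμ; in particular the series ∑_{γ∈Γ} ∫_G φ(γ⁻¹x)·f(x) dμ(x) converges absolutely. -/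
/-!
Translating `x = γ y` (left invariance of `μ`) gives
`|∫ φ(γ⁻¹x) f(x) dμ| ≤ ∫ |φ(y)| |f(γy)| dμ(y)`, and summing over any finite set of `γ` under the
integral sign bounds the total by `∫ |φ| · sup_y ∑_γ |f(γy)| ≤ K M_d ∫ |φ|`.
-/

open MeasureTheory Finset

section Integrals

variable {X ι : Type*} [MeasurableSpace X] {μ : Measure X}

theorem summable_integral_mul_of_sum_le {ψ : X → ℝ} (hψ : Integrable ψ μ) (hψ0 : 0 ≤ ψ)
    {h : ι → X → ℝ} (hh : ∀ i, AEStronglyMeasurable (h i) μ) (hh0 : ∀ i x, 0 ≤ h i x)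
    {C : ℝ} (hC : ∀ x (s : Finset ι), ∑ i ∈ s, h i x ≤ C) :
    Summable (fun i => ∫ x, ψ x * h i x ∂μ) ∧ ∑' i, ∫ x, ψ x * h i x ∂μ ≤ C * ∫ x, ψ x ∂μ := by
  have hint : ∀ i, Integrable (fun x => ψ x * h i x) μ := fun i =>
    hψ.mul_bdd (hh i) (.of_forall fun x => by
      simpa [abs_of_nonneg (hh0 i x)] using hC x {i})
  have hfin : ∀ s : Finset ι, ∑ i ∈ s, ∫ x, ψ x * h i x ∂μ ≤ C * ∫ x, ψ x ∂μ := fun s => calc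
    ∑ i ∈ s, ∫ x, ψ x * h i x ∂μ = ∫ x, ψ x * ∑ i ∈ s, h i x ∂μ := by
      simp_rw [mul_sum]
      exact (integral_finsetSum s fun i _ => hint i).symm
    _ ≤ ∫ x, C * ψ x ∂μ :=
      integral_mono (by simpa only [mul_sum] using integrable_finsetSum s fun i _ => hint i)
        (hψ.const_mul C) fun x => by
          simpa only [mul_comm C] using mul_le_mul_of_nonneg_left (hC x s) (hψ0 x)
    _ = C * ∫ x, ψ x ∂μ := integral_const_mul C ψ
  have hsumm : Summable fun i => ∫ x, ψ x * h i x ∂μ :=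
    summable_of_sum_le (fun i => integral_nonneg fun x => mul_nonneg (hψ0 x) (hh0 i x)) hfin
  exact ⟨hsumm, hsumm.tsum_le_of_sum_le hfin⟩

end Integrals

section LeftTranslates

variable {G E : Type*} [Group G] [MeasurableSpace G] [MeasurableMul G] {μ : Measure G}
  [μ.IsMulLeftInvariant] [NormedDivisionRing E] [NormedSpace ℝ E]

theorem norm_integral_translate_mul_le (φ f : G → E) (g : G) :
    ‖∫ x, φ (g⁻¹ * x) * f x ∂μ‖ ≤ ∫ y, ‖φ y‖ * ‖f (g * y)‖ ∂μ := calc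
  ‖∫ x, φ (g⁻¹ * x) * f x ∂μ‖ ≤ ∫ x, ‖φ (g⁻¹ * x) * f x‖ ∂μ := norm_integral_le_integral_norm _
  _ = ∫ y, ‖φ y‖ * ‖f (g * y)‖ ∂μ := by
    rw [← integral_mul_left_eq_self _ g]
    simp only [inv_mul_cancel_left, norm_mul]

end LeftTranslates

theorem stmt6_general {G : Type*} [Group G] [TopologicalSpace G] [IsTopologicalGroup G]
    [MeasurableSpace G] [BorelSpace G]
    (μ : Measure G) [μ.IsHaarMeasure]
    (Γ : Subgroup G)
    (N : G → ℝ) (hN1 : ∀ x, 1 ≤ N x)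
    (d : ℝ) (Md : ℝ)
    (hsum : ∀ x : G, Summable fun γ : Γ => N ((γ : G) * x) ^ (-d))
    (hMd : ∀ x : G, (∑' γ : Γ, N ((γ : G) * x) ^ (-d)) ≤ Md)
    (φ : G → ℂ) (hφ : Integrable φ μ)
    (K : ℝ) (hK : 0 ≤ K)
    (f : G → ℂ) (hf : Measurable f)
    (hfb : ∀ x : G, ‖f x‖ ≤ K * N x ^ (-d)) :
    (∀ γ : Γ, Integrable (fun x => φ (((γ : G))⁻¹ * x) * f x) μ) ∧
    (Summable fun γ : Γ => ‖∫ x, φ (((γ : G))⁻¹ * x) * f x ∂μ‖) ∧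
    (∑' γ : Γ, ‖∫ x, φ (((γ : G))⁻¹ * x) * f x ∂μ‖) ≤
      K * Md * ∫ x, ‖φ x‖ ∂μ := by
  have hfsum : ∀ y (s : Finset Γ), ∑ γ ∈ s, ‖f (γ * y)‖ ≤ K * Md := fun y s => calc
    ∑ γ ∈ s, ‖f (γ * y)‖ ≤ ∑ γ ∈ s, K * N (γ * y) ^ (-d) := sum_le_sum fun γ _ => hfb _
    _ = K * ∑ γ ∈ s, N (γ * y) ^ (-d) := (mul_sum _ _ _).symm
    _ ≤ K * Md := mul_le_mul_of_nonneg_left (((hsum y).sum_le_tsum s fun γ _ =>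
      Real.rpow_nonneg (zero_le_one.trans (hN1 _)) _).trans (hMd y)) hK
  -- the `γ = 1` term of `hfsum` alone bounds `f`
  have hfbdd : ∀ x, ‖f x‖ ≤ K * Md := fun x => by simpa using hfsum x {1}
  obtain ⟨hdom, hdom_le⟩ := summable_integral_mul_of_sum_le hφ.norm (fun _ => norm_nonneg _)
    (h := fun (γ : Γ) y => ‖f (γ * y)‖)
    (fun γ => (hf.comp (measurable_const_mul (γ : G))).norm.aestronglyMeasurable)
    (fun _ _ => norm_nonneg _) hfsum
  have hle := fun γ : Γ => norm_integral_translate_mul_le (μ := μ) φ f γ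
  have hsumm := hdom.of_nonneg_of_le (fun _ => norm_nonneg _) hle
  refine ⟨fun γ => ?_, hsumm, (hsumm.tsum_le_tsum hle hdom).trans hdom_le⟩
  exact (hφ.comp_mul_left _).mul_bdd hf.aestronglyMeasurable (.of_forall hfbdd)

/-- Absolute convergence of the Poincaré series of an `L¹` function paired against a function
dominated by `K‖x‖^{-d}`: each `x ↦ φ(γ⁻¹x) f(x)` is integrable, and
`∑_{γ∈Γ} |∫_G φ(γ⁻¹x) f(x) dμ(x)| ≤ K · M_d · ∫_G |φ| dμ`. -/
theorem stmt6 {G : Type*} [Group G] [TopologicalSpace G] [IsTopologicalGroup G]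
    [LocallyCompactSpace G] [T2Space G] [MeasurableSpace G] [BorelSpace G]
    (μ : Measure G) [μ.IsHaarMeasure]
    (Γ : Subgroup G) [Countable Γ]
    (N : G → ℝ) (hNmeas : Measurable N) (hN1 : ∀ x, 1 ≤ N x)
    (d : ℝ) (hd : 0 < d) (Md : ℝ)
    (hsum : ∀ x : G, Summable fun γ : Γ => N ((γ : G) * x) ^ (-d))
    (hMd : ∀ x : G, (∑' γ : Γ, N ((γ : G) * x) ^ (-d)) ≤ Md)
    (φ : G → ℂ) (hφ : Integrable φ μ)
    (K : ℝ) (hK : 0 ≤ K)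
    (f : G → ℂ) (hf : Measurable f)
    (hfb : ∀ x : G, ‖f x‖ ≤ K * N x ^ (-d)) :
    (∀ γ : Γ, Integrable (fun x => φ (((γ : G))⁻¹ * x) * f x) μ) ∧
    (Summable fun γ : Γ => ‖∫ x, φ (((γ : G))⁻¹ * x) * f x ∂μ‖) ∧
    (∑' γ : Γ, ‖∫ x, φ (((γ : G))⁻¹ * x) * f x ∂μ‖) ≤
      K * Md * ∫ x, ‖φ x‖ ∂μ :=
  stmt6_general μ Γ N hN1 d Md hsum hMd φ hφ K hK f hf hfb
end
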